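/- arXiv:2104.08329 — 2 statements merged into one kernel-verified Lean document; each statement's English description precedes it below -/
import Mathlib

section
/- Let $V:[t_0,t_1)\to\mathbb{R}_{\ge 0}$ be continuously differentiable with $\dot V(t)\le 2aV(t)+b\sqrt{2V(t)}$ for all $t$, where $a,b>0$, and $V(t_0)=0$. Then $V(t)\le \Big(\frac{b}{a}\frac{\sqrt2}{2}\big(e^{a(t-t_0)}-1\big)\Big)^2$ for all $t\in[t_0,t_1)$. -/
open Real Set Filter Topology

/-
Regularise: for `δ > 0` the function `W = √(2V + δ)` is differentiable, and dividing the
differential inequality by `W` (using `2V ≤ W²` and `√(2V) ≤ W`) linearises it to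
`Ẇ ≤ aW + b`. Grönwall's inequality bounds `W`, and letting `δ → 0` bounds `√(2V)` by the
solution `(b / a) (e^{a(t - t₀)} - 1)` of `ẇ = aw + b`, `w(t₀) = 0`.
-/

theorem gronwallBound_continuous_δ (K ε x : ℝ) : Continuous fun δ => gronwallBound δ K ε x := by
  by_cases hK : K = 0
  · simp only [gronwallBound_K0, hK]
    fun_prop
  · simp only [gronwallBound_of_K_ne_0 hK]
    fun_prop

lemma div_sqrt_two_mul_add_le {a b v v' δ : ℝ} (ha : 0 ≤ a) (hb : 0 ≤ b) (hv : 0 ≤ v)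
    (hδ : 0 < δ) (hv' : v' ≤ 2 * a * v + b * √(2 * v)) :
    v' / √(2 * v + δ) ≤ a * √(2 * v + δ) + b := by
  have hw : 0 < √(2 * v + δ) := sqrt_pos.mpr (by linarith)
  have hw_sq : √(2 * v + δ) ^ 2 = 2 * v + δ := sq_sqrt (by linarith)
  have hsqrt_le : √(2 * v) ≤ √(2 * v + δ) := sqrt_le_sqrt (by linarith)
  rw [div_le_iff₀ hw]
  nlinarith [mul_le_mul_of_nonneg_left hsqrt_le hb]

lemma le_sq_of_sqrt_two_mul_le {v c : ℝ} (h : √(2 * v) ≤ c) : v ≤ (√2 / 2 * c) ^ 2 := by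
  have hc : 2 * v ≤ c ^ 2 := (sqrt_le_left ((sqrt_nonneg _).trans h)).mp h
  have h2 : √2 ^ 2 = 2 := sq_sqrt zero_le_two
  nlinarith

section Bernoulli

variable {a b t0 t : ℝ} {V V' : ℝ → ℝ}

lemma sqrt_two_mul_add_le_gronwallBound (ha : 0 ≤ a) (hb : 0 ≤ b) {δ : ℝ} (hδ : 0 < δ)
    (hcont : ContinuousOn V (Icc t0 t)) (hderiv : ∀ s ∈ Ico t0 t, HasDerivAt V (V' s) s)
    (hnonneg : ∀ s ∈ Ico t0 t, 0 ≤ V s)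
    (hbound : ∀ s ∈ Ico t0 t, V' s ≤ 2 * a * V s + b * √(2 * V s)) :
    ∀ s ∈ Icc t0 t, √(2 * V s + δ) ≤ gronwallBound (√(2 * V t0 + δ)) a b (s - t0) := by
  have hW_deriv : ∀ s ∈ Ico t0 t,
      HasDerivAt (fun y => √(2 * V y + δ)) (V' s / √(2 * V s + δ)) s := by
    intro s hs
    have hpos : 0 < 2 * V s + δ := by linarith [hnonneg s hs]
    convert (((hderiv s hs).const_mul 2).add_const δ).sqrt hpos.ne' using 1
    rw [mul_div_mul_left _ _ two_ne_zero]
  refine le_gronwallBound_of_liminf_deriv_right_le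
    (by fun_prop (disch := exact sqrt_nonneg _))
    (fun s hs r hr => (hW_deriv s hs).hasDerivWithinAt.liminf_right_slope_le hr) le_rfl ?_
  exact fun s hs => div_sqrt_two_mul_add_le ha hb (hnonneg s hs) hδ (hbound s hs)

lemma sqrt_two_mul_le_gronwallBound (ha : 0 ≤ a) (hb : 0 ≤ b)
    (hcont : ContinuousOn V (Icc t0 t)) (hderiv : ∀ s ∈ Ico t0 t, HasDerivAt V (V' s) s)
    (hnonneg : ∀ s ∈ Ico t0 t, 0 ≤ V s)
    (hbound : ∀ s ∈ Ico t0 t, V' s ≤ 2 * a * V s + b * √(2 * V s)) :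
    ∀ s ∈ Icc t0 t, √(2 * V s) ≤ gronwallBound (√(2 * V t0)) a b (s - t0) := by
  intro s hs
  have hlim : Tendsto (fun δ => gronwallBound (√(2 * V t0 + δ)) a b (s - t0)) (𝓝[>] 0)
      (𝓝 (gronwallBound (√(2 * V t0)) a b (s - t0))) := by
    have hcont_δ : Continuous fun δ => gronwallBound (√(2 * V t0 + δ)) a b (s - t0) :=
      (gronwallBound_continuous_δ a b (s - t0)).comp (by fun_prop)
    simpa only [add_zero] using (hcont_δ.continuousWithinAt (s := Ioi 0) (x := 0)).tendsto
  refine ge_of_tendsto hlim (eventually_nhdsWithin_of_forall fun δ (hδ : 0 < δ) => ?_)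
  calc √(2 * V s) ≤ √(2 * V s + δ) := sqrt_le_sqrt (by linarith)
    _ ≤ _ := sqrt_two_mul_add_le_gronwallBound ha hb hδ hcont hderiv hnonneg hbound s hs

end Bernoulli

/-- Equation (16) of the paper: the Bernoulli-type differential inequality
`V̇ ≤ 2aV + b√(2V)` with `V(t₀)=0` is bounded by the solution of the
corresponding ODE. -/
theorem bernoulli_comparison_bound
    (a b : ℝ) (ha : 0 < a) (hb : 0 < b)
    (t0 t1 : ℝ) (V : ℝ → ℝ)
    (hVnonneg : ∀ t ∈ Ico t0 t1, 0 ≤ V t)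
    (hV : ∀ t ∈ Ico t0 t1,
      HasDerivAt V (deriv V t) t ∧ deriv V t ≤ 2 * a * V t + b * Real.sqrt (2 * V t))
    (hV0 : V t0 = 0) :
    ∀ t ∈ Ico t0 t1,
      V t ≤ (b / a * (Real.sqrt 2 / 2) * (Real.exp (a * (t - t0)) - 1)) ^ 2 := by
  intro t ht
  have hsub : Icc t0 t ⊆ Ico t0 t1 := Icc_subset_Ico_right ht.2
  have hsqrt := sqrt_two_mul_le_gronwallBound ha.le hb.le
    (fun s hs => (hV s (hsub hs)).1.continuousAt.continuousWithinAt)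
    (fun s hs => (hV s (hsub (Ico_subset_Icc_self hs))).1)
    (fun s hs => hVnonneg s (hsub (Ico_subset_Icc_self hs)))
    (fun s hs => (hV s (hsub (Ico_subset_Icc_self hs))).2) t (right_mem_Icc.mpr ht.1)
  rw [hV0, mul_zero, sqrt_zero, gronwallBound_of_K_ne_0 ha.ne'] at hsqrt
  calc V t ≤ (√2 / 2 * (0 * exp (a * (t - t0)) + b / a * (exp (a * (t - t0)) - 1))) ^ 2 :=
        le_sq_of_sqrt_two_mul_le hsqrt
    _ = _ := by ring
end

section
/- Let $g:\mathbb{R}_{\ge0}\to\mathbb{R}^m$ be continuous, and let $0=t_0<t_1<t_2<\cdots$ with $t_s\to\infty$. Suppose for each $s$, $e:[t_s,t_{s+1})\to\mathbb{R}^m$ is defined by $e(t)=\int_{t_s}^t \big(Ae(\tau)+g(\tau)\big)\,d\tau$ (i.e., $e$ solves $\dot e = Ae+g$ with reset $e(t_s)=0$ at each $t_s$), $\|g(\tau)\|\le\kappa$ for all $\tau$, and $\sup_s (t_{s+1}-t_s) \le \frac{1}{S_{\max}(A)}\ln\big(\frac{V_T S_{\max}(A)}{\kappa}+1\big)$ for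 some $V_T>0$. Then $\|e(t)\|\le V_T$ for all $t\ge 0$. -/
/-! On each inter-service interval `[tₛ, tₛ₊₁)` the error starts at `0` and satisfies
`‖ė‖ ≤ Smax ‖e‖ + κ`, so Grönwall's inequality gives
`‖e t‖ ≤ κ / Smax * (exp (Smax (t - tₛ)) - 1)`, and the dwell-time condition is exactly what keeps
this below `V_T`. -/

open Real Set intervalIntegral MeasureTheory Filter Topology

theorem exists_mem_Ico_of_tendsto_atTop {α : Type*} [LinearOrder α] [NoMaxOrder α] {u : ℕ → α}
    (hu : Tendsto u atTop atTop) {t : α} (ht : u 0 ≤ t) : ∃ n, t ∈ Ico (u n) (u (n + 1)) := by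
  by_contra! h
  simp only [mem_Ico, not_and, not_lt] at h
  have hle : ∀ n, u n ≤ t := fun n => Nat.rec ht (fun n hn => h n hn) n
  obtain ⟨n, hn⟩ := (hu.eventually_gt_atTop t).exists
  exact (hle n).not_gt hn

theorem gronwallBound_le_of_le_log {K κ V x : ℝ} (hK : 0 < K) (hκ : 0 ≤ κ) (hV : 0 ≤ V)
    (hx : x ≤ 1 / K * log (V * K / κ + 1)) : gronwallBound 0 K κ x ≤ V := by
  have hexp : exp (K * x) ≤ V * K / κ + 1 := by
    rw [← le_log_iff_exp_le (by positivity)]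
    calc K * x ≤ K * (1 / K * log (V * K / κ + 1)) := by gcongr
      _ = log (V * K / κ + 1) := by field_simp
  simp only [gronwallBound_of_K_ne_0 hK.ne', zero_mul, zero_add]
  rcases hκ.eq_or_lt with rfl | hκ
  · simpa using hV
  calc κ / K * (exp (K * x) - 1) ≤ κ / K * (V * K / κ) := by gcongr; linarith
    _ = V := by field_simp

section

variable {E : Type*} [NormedAddCommGroup E] [NormedSpace ℝ E]

theorem continuousOn_Icc_of_eq_integral {f e : ℝ → E} {a v : ℝ} (hav : a ≤ v)
    (hf : IntervalIntegrable f volume a v) (he : ∀ u ∈ Icc a v, e u = ∫ τ in a..u, f τ) :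
    ContinuousOn e (Icc a v) := by
  have := continuousOn_primitive_interval' hf left_mem_uIcc
  rw [uIcc_of_le hav] at this
  exact this.congr he

variable [CompleteSpace E]

theorem hasDerivWithinAt_Ici_of_eq_integral {f e : ℝ → E} {a v x : ℝ}
    (hf : ContinuousOn f (Icc a v)) (he : ∀ u ∈ Icc a v, e u = ∫ τ in a..u, f τ)
    (hx : x ∈ Ico a v) : HasDerivWithinAt e (f x) (Ici x) x := by
  have hGE : Icc a v ∈ 𝓝[≥] x := Icc_mem_nhdsGE_of_mem hx
  have hGT : Icc a v ∈ 𝓝[>] x := nhdsWithin_mono x Ioi_subset_Ici_self hGE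
  have hint : IntervalIntegrable f volume a x :=
    (hf.mono (Icc_subset_Icc_right hx.2.le)).intervalIntegrable_of_Icc hx.1
  have hmeas : StronglyMeasurableAtFilter f (𝓝[>] x) :=
    ⟨Icc a v, hGT, hf.aestronglyMeasurable measurableSet_Icc⟩
  have hderiv : HasDerivWithinAt (fun u => ∫ τ in a..u, f τ) (f x) (Ici x) x :=
    integral_hasDerivWithinAt_right hint hmeas
      ((hf x (Ico_subset_Icc_self hx)).mono_of_mem_nhdsWithin hGT)
  exact hderiv.congr_of_eventuallyEq (eventuallyEq_of_mem hGE he) (he x (Ico_subset_Icc_self hx))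

variable (A : E →L[ℝ] E) {K κ : ℝ} {g : ℝ → E} {e : ℝ → E}

theorem norm_le_gronwallBound_of_eq_integral (hA : ∀ v, ‖A v‖ ≤ K * ‖v‖) (hgc : Continuous g)
    (hg : ∀ τ, ‖g τ‖ ≤ κ) {a v : ℝ} (hav : a ≤ v)
    (hint : IntervalIntegrable (fun τ => A (e τ) + g τ) volume a v)
    (he : ∀ u ∈ Icc a v, e u = ∫ τ in a..u, A (e τ) + g τ) :
    ∀ u ∈ Icc a v, ‖e u‖ ≤ gronwallBound 0 K κ (u - a) := by
  have hec : ContinuousOn e (Icc a v) := continuousOn_Icc_of_eq_integral hav hint he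
  have hfc : ContinuousOn (fun τ => A (e τ) + g τ) (Icc a v) :=
    (A.continuous.comp_continuousOn hec).add hgc.continuousOn
  have hea : ‖e a‖ ≤ 0 := by simp [he a (left_mem_Icc.2 hav)]
  exact norm_le_gronwallBound_of_norm_deriv_right_le hec
    (fun x hx => hasDerivWithinAt_Ici_of_eq_integral hfc he hx) hea
    (fun x _ => (norm_add_le _ _).trans (add_le_add (hA _) (hg _)))

theorem intervalIntegrable_of_eq_integral_of_forall_lt (hK : 0 ≤ K) (hA : ∀ v, ‖A v‖ ≤ K * ‖v‖)
    (hgc : Continuous g) (hg : ∀ τ, ‖g τ‖ ≤ κ) {a β : ℝ} (haβ : a ≤ β)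
    (hint : ∀ u ∈ Ico a β, IntervalIntegrable (fun τ => A (e τ) + g τ) volume a u)
    (he : ∀ u ∈ Ico a β, e u = ∫ τ in a..u, A (e τ) + g τ) :
    IntervalIntegrable (fun τ => A (e τ) + g τ) volume a β := by
  have hκ : 0 ≤ κ := (norm_nonneg _).trans (hg 0)
  have he' : ∀ u ∈ Ico a β, ∀ y ∈ Icc a u, e y = ∫ τ in a..y, A (e τ) + g τ :=
    fun u hu y hy => he y ⟨hy.1, hy.2.trans_lt hu.2⟩
  have hec : ContinuousOn e (Ico a β) := by
    refine continuousOn_of_locally_continuousOn fun u ⟨hau, huβ⟩ => ?_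
    have hw : (u + β) / 2 ∈ Ico a β := ⟨by linarith, by linarith⟩
    refine ⟨Iio ((u + β) / 2), isOpen_Iio, by simp only [mem_Iio]; linarith, ?_⟩
    exact (continuousOn_Icc_of_eq_integral hw.1 (hint _ hw) (he' _ hw)).mono
      fun y hy => ⟨hy.1.1, hy.2.le⟩
  have hbound : ∀ u ∈ Ico a β, ‖A (e u) + g u‖ ≤ K * gronwallBound 0 K κ (β - a) + κ := by
    intro u hu
    have heu : ‖e u‖ ≤ gronwallBound 0 K κ (β - a) :=
      (norm_le_gronwallBound_of_eq_integral A hA hgc hg hu.1 (hint u hu) (he' u hu) u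
        ⟨hu.1, le_rfl⟩).trans (gronwallBound_mono le_rfl hκ hK (by linarith [hu.2]))
    calc ‖A (e u) + g u‖ ≤ K * ‖e u‖ + κ := (norm_add_le _ _).trans (add_le_add (hA _) (hg _))
      _ ≤ _ := by gcongr
  have hfc : ContinuousOn (fun τ => A (e τ) + g τ) (Ico a β) :=
    (A.continuous.comp_continuousOn hec).add hgc.continuousOn
  rw [intervalIntegrable_iff_integrableOn_Ico_of_le haβ]
  exact Integrable.of_bound (hfc.aestronglyMeasurable measurableSet_Ico) _
    ((ae_restrict_iff' measurableSet_Ico).2 (Eventually.of_forall hbound))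

/-- The integral equation does not presuppose that `A ∘ e + g` is integrable. Past the infimum `β`
of the points where integrability fails, the integrals take the junk value `0`, so `e = 0` and the
integrand is `g`; before `β`, Grönwall bounds the integrand. So integrability extends past `β`. -/
theorem intervalIntegrable_of_eq_integral (hK : 0 ≤ K) (hA : ∀ v, ‖A v‖ ≤ K * ‖v‖)
    (hgc : Continuous g) (hg : ∀ τ, ‖g τ‖ ≤ κ) {a b : ℝ}
    (he : ∀ u ∈ Ico a b, e u = ∫ τ in a..u, A (e τ) + g τ) :
    ∀ v ∈ Ico a b, IntervalIntegrable (fun τ => A (e τ) + g τ) volume a v := by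
  set f := fun τ => A (e τ) + g τ
  have hmono : ∀ {u v}, a ≤ u → u ≤ v → IntervalIntegrable f volume a v →
      IntervalIntegrable f volume a u := fun hau huv hv =>
    hv.mono_set (by rw [uIcc_of_le hau, uIcc_of_le (hau.trans huv)]; exact Icc_subset_Icc_right huv)
  by_contra! hbad
  set N := {u ∈ Ico a b | ¬IntervalIntegrable f volume a u}
  have hN : N.Nonempty := hbad
  have hNa : ∀ u ∈ N, a ≤ u := fun u hu => hu.1.1
  set β := sInf N
  have haβ : a ≤ β := le_csInf hN hNa
  have hβb : β < b := by
    obtain ⟨u, hu⟩ := hN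
    exact (csInf_le ⟨a, hNa⟩ hu).trans_lt hu.1.2
  have hbelow : ∀ u ∈ Ico a β, IntervalIntegrable f volume a u := fun u hu => by
    by_contra h
    exact (csInf_le ⟨a, hNa⟩ ⟨⟨hu.1, hu.2.trans hβb⟩, h⟩).not_gt hu.2
  have hβ : IntervalIntegrable f volume a β :=
    intervalIntegrable_of_eq_integral_of_forall_lt A hK hA hgc hg haβ hbelow
      fun u hu => he u ⟨hu.1, hu.2.trans hβb⟩
  have habove : ∀ y ∈ Ioo β b, ¬IntervalIntegrable f volume a y := fun y hy hy' => by
    obtain ⟨u, huN, huy⟩ := exists_lt_of_csInf_lt hN hy.1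
    exact huN.2 (hmono huN.1.1 huy.le hy')
  have hfg : EqOn g f (Ioo β b) := fun y hy => by
    have hay : a ≤ y := haβ.trans hy.1.le
    simp only [f, he y ⟨hay, hy.2⟩, integral_undef (habove y hy), map_zero, zero_add]
  have hw : (β + b) / 2 ∈ Ioo β b := ⟨by linarith, by linarith⟩
  have hβw : IntervalIntegrable f volume β ((β + b) / 2) := by
    rw [intervalIntegrable_iff_integrableOn_Ioo_of_le hw.1.le]
    exact (hgc.integrableOn_Icc.mono_set Ioo_subset_Icc_self).congr_fun
      (hfg.mono (Ioo_subset_Ioo_right hw.2.le)) measurableSet_Ioo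
  exact habove _ hw (hβ.trans hβw)

theorem norm_le_gronwallBound_of_eq_integral_Ico (hK : 0 ≤ K) (hA : ∀ v, ‖A v‖ ≤ K * ‖v‖)
    (hgc : Continuous g) (hg : ∀ τ, ‖g τ‖ ≤ κ) {a b : ℝ}
    (he : ∀ u ∈ Ico a b, e u = ∫ τ in a..u, A (e τ) + g τ) :
    ∀ u ∈ Ico a b, ‖e u‖ ≤ gronwallBound 0 K κ (u - a) := fun u hu =>
  norm_le_gronwallBound_of_eq_integral A hA hgc hg hu.1
    (intervalIntegrable_of_eq_integral A hK hA hgc hg he u hu)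
    (fun y hy => he y ⟨hy.1, hy.2.trans_lt hu.2⟩) u ⟨hu.1, le_rfl⟩

end

theorem observer_error_global_bound_general {m : ℕ}
    (A : EuclideanSpace ℝ (Fin m) →L[ℝ] EuclideanSpace ℝ (Fin m))
    (Smax : ℝ) (hSmax : 0 < Smax) (hA : ∀ v, ‖A v‖ ≤ Smax * ‖v‖)
    (g : ℝ → EuclideanSpace ℝ (Fin m)) (hgcont : Continuous g)
    (κ : ℝ) (hg : ∀ τ, ‖g τ‖ ≤ κ)
    (ts : ℕ → ℝ) (hts0 : ts 0 = 0)
    (htsinf : Filter.Tendsto ts Filter.atTop Filter.atTop)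
    (e : ℝ → EuclideanSpace ℝ (Fin m))
    (he : ∀ s : ℕ, ∀ u ∈ Ico (ts s) (ts (s + 1)),
      e u = ∫ τ in (ts s)..u, (A (e τ) + g τ))
    (V_T : ℝ) (hVT : 0 < V_T)
    (hdwell : ∀ s : ℕ, ts (s + 1) - ts s ≤ 1 / Smax * Real.log (V_T * Smax / κ + 1)) :
    ∀ t, 0 ≤ t → ‖e t‖ ≤ V_T := by
  intro t ht
  obtain ⟨s, hs⟩ := exists_mem_Ico_of_tendsto_atTop htsinf (hts0 ▸ ht)
  calc ‖e t‖ ≤ gronwallBound 0 Smax κ (t - ts s) :=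
        norm_le_gronwallBound_of_eq_integral_Ico A hSmax.le hA hgcont hg (he s) t hs
    _ ≤ V_T := gronwallBound_le_of_le_log hSmax ((norm_nonneg _).trans (hg 0)) hVT.le
        (by linarith [hdwell s, hs.2])

/-- Global version of Theorem 1: with resets to zero at each service time and all
dwell times satisfying the maximum dwell-time condition, the observer error stays
within the tolerance `V_T` for all time. -/
theorem observer_error_global_bound {m : ℕ}
    (A : EuclideanSpace ℝ (Fin m) →L[ℝ] EuclideanSpace ℝ (Fin m))
    (Smax : ℝ) (hSmax : 0 < Smax) (hA : ∀ v, ‖A v‖ ≤ Smax * ‖v‖)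
    (g : ℝ → EuclideanSpace ℝ (Fin m)) (hgcont : Continuous g)
    (κ : ℝ) (hκ : 0 < κ) (hg : ∀ τ, ‖g τ‖ ≤ κ)
    (ts : ℕ → ℝ) (hts0 : ts 0 = 0) (htsmono : StrictMono ts)
    (htsinf : Filter.Tendsto ts Filter.atTop Filter.atTop)
    (e : ℝ → EuclideanSpace ℝ (Fin m))
    (he : ∀ s : ℕ, ∀ u ∈ Ico (ts s) (ts (s + 1)),
      e u = ∫ τ in (ts s)..u, (A (e τ) + g τ))
    (V_T : ℝ) (hVT : 0 < V_T)
    (hdwell : ∀ s : ℕ, ts (s + 1) - ts s ≤ 1 / Smax * Real.log (V_T * Smax / κ + 1)) :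
    ∀ t, 0 ≤ t → ‖e t‖ ≤ V_T :=
  observer_error_global_bound_general A Smax hSmax hA g hgcont κ hg ts hts0 htsinf e he V_T hVT
    hdwell
end
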